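/- The boundary value problem u'''(t) = -(5u(t)³ + 4u(t) + 3)/(u(t)² + 1) on (0,1) with u(0)=u'(0)=u'(1)=0 has a unique monotone (nondecreasing) nonnegative solution u satisfying 0 ≤ u(t) ≤ 0.3417, 0 ≤ u'(t) ≤ 0.5125, |u''(t)| ≤ 2.05 on [0,1]. -/

import Mathlib

/-- `u` solves `u''' = -(5u³+4u+3)/(u²+1)` on `(0,1)` with `u(0)=u'(0)=u'(1)=0`. -/
def IsSolution (u : ℝ → ℝ) : Prop :=
  ContDiff ℝ 2 u ∧
  (∀ t ∈ Set.Ioo (0:ℝ) 1,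
    HasDerivAt (deriv (deriv u)) (-((5 * (u t) ^ 3 + 4 * u t + 3) / ((u t) ^ 2 + 1))) t) ∧
  u 0 = 0 ∧ deriv u 0 = 0 ∧ deriv u 1 = 0

/-- bounds of the example. -/
def InBounds (u : ℝ → ℝ) : Prop :=
  ∀ t ∈ Set.Icc (0:ℝ) 1,
    u t ∈ Set.Icc 0 ((0.3417 : ℝ)) ∧ deriv u t ∈ Set.Icc 0 ((0.5125 : ℝ)) ∧ |deriv (deriv u) t| ≤ (2.05 : ℝ)

/-
Put `p = u'`. If `-K ≤ u'''` on `(0,1)`, then `p - K t(1-t)/2` is convex and vanishes at `0` and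
`1`; this bounds `p` by `K t(1-t)/2` and `p'(0)`, `-p'(1)` by `K/2`. This gives the Green function
constants: `|u| ≤ K/12` whenever `|u'''| ≤ K`, and `0 ≤ u' ≤ K/8`, `|u''| ≤ K/2` (`u''` being
monotone) whenever `-K ≤ u''' ≤ 0`.
On `[0, 0.3417]` the nonlinearity takes values in `[0, 4.1]` and is `5`-Lipschitz, so the Picard
map of the problem with truncated nonlinearity is a `5/12`-contraction of `C([0,1])`. Its fixed
point solves the original problem, with `4.1/12 ≤ 0.3417`, `4.1/8 = 0.5125`, `4.1/2 = 2.05`; the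
same estimate applied to the difference of two solutions gives uniqueness.
-/

open Set

lemma hasDerivAt_parabola (K t : ℝ) :
    HasDerivAt (fun t => K * (t * (1 - t)) / 2) (K * (1 - 2 * t) / 2) t :=
  ((((hasDerivAt_id t).mul ((hasDerivAt_id t).const_sub 1)).const_mul K).div_const 2).congr_deriv
    (by simp only [id]; ring)

section Dirichlet

variable {p p' f : ℝ → ℝ} {K : ℝ}

lemma convexOn_sub_parabola (hp : ∀ t, HasDerivAt p (p' t) t)
    (hp' : ∀ t ∈ Ioo (0:ℝ) 1, HasDerivAt p' (f t) t) (hf : ∀ t ∈ Ioo (0:ℝ) 1, -K ≤ f t) :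
    ConvexOn ℝ (Icc 0 1) (fun t => p t - K * (t * (1 - t)) / 2) := by
  have hr t : HasDerivAt (fun t => p t - K * (t * (1 - t)) / 2) (p' t - K * (1 - 2 * t) / 2) t :=
    (hp t).sub (hasDerivAt_parabola K t)
  refine convexOn_of_hasDerivWithinAt2_nonneg (convex_Icc 0 1)
    (fun t _ => (hr t).continuousAt.continuousWithinAt) (fun t _ => (hr t).hasDerivWithinAt)
    (f'' := fun t => f t + K) (fun t ht => ?_) (fun t ht => ?_)
  · rw [interior_Icc] at ht
    exact ((hp' t ht).sub ((((hasDerivAt_id t).const_mul 2).const_sub 1).const_mul K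
      |>.div_const 2)).hasDerivWithinAt.congr_deriv (by ring)
  · rw [interior_Icc] at ht
    linarith [hf t ht]

variable (hp : ∀ t, HasDerivAt p (p' t) t) (hp' : ∀ t ∈ Ioo (0:ℝ) 1, HasDerivAt p' (f t) t)
  (hf : ∀ t ∈ Ioo (0:ℝ) 1, -K ≤ f t) (h0 : p 0 = 0) (h1 : p 1 = 0)
include hp hp' hf h0 h1

lemma le_parabola_of_deriv2_ge {t : ℝ} (ht : t ∈ Icc (0:ℝ) 1) : p t ≤ K * (t * (1 - t)) / 2 := by
  have := (convexOn_sub_parabola hp hp' hf).le_on_segment (left_mem_Icc.2 zero_le_one)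
    (right_mem_Icc.2 zero_le_one) (by rwa [segment_eq_Icc zero_le_one])
  simpa [h0, h1] using this

lemma deriv_zero_le_of_deriv2_ge : p' 0 ≤ K / 2 := by
  have := (convexOn_sub_parabola hp hp' hf).le_slope_of_hasDerivAt (left_mem_Icc.2 zero_le_one)
    (right_mem_Icc.2 zero_le_one) zero_lt_one ((hp 0).sub (hasDerivAt_parabola K 0))
  rw [slope_def_field, h0, h1] at this
  linarith

lemma neg_le_deriv_one_of_deriv2_ge : -(K / 2) ≤ p' 1 := by
  have := (convexOn_sub_parabola hp hp' hf).slope_le_of_hasDerivAt (left_mem_Icc.2 zero_le_one)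
    (right_mem_Icc.2 zero_le_one) zero_lt_one ((hp 1).sub (hasDerivAt_parabola K 1))
  rw [slope_def_field, h0, h1] at this
  linarith

end Dirichlet

structure SolvesBVP (w f : ℝ → ℝ) : Prop where
  contDiff : ContDiff ℝ 2 w
  hasDerivAt_deriv2 : ∀ t ∈ Ioo (0:ℝ) 1, HasDerivAt (deriv (deriv w)) (f t) t
  zero : w 0 = 0
  deriv_zero : deriv w 0 = 0
  deriv_one : deriv w 1 = 0

namespace SolvesBVP

variable {w v f g : ℝ → ℝ} {K : ℝ}

lemma contDiff_deriv (h : SolvesBVP w f) : ContDiff ℝ 1 (deriv w) :=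
  (contDiff_succ_iff_deriv (n := 1).1 h.contDiff).2.2

lemma differentiable (h : SolvesBVP w f) : Differentiable ℝ w :=
  h.contDiff.differentiable (by norm_num)

lemma hasDerivAt_deriv (h : SolvesBVP w f) (t : ℝ) : HasDerivAt (deriv w) (deriv (deriv w) t) t :=
  (h.contDiff_deriv.differentiable one_ne_zero t).hasDerivAt

lemma neg (h : SolvesBVP w f) : SolvesBVP (-w) (-f) where
  contDiff := h.contDiff.neg
  hasDerivAt_deriv2 t ht := by
    rw [deriv.neg', deriv.fun_neg']
    exact (h.hasDerivAt_deriv2 t ht).neg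
  zero := by simp [h.zero]
  deriv_zero := by simp [deriv.neg, h.deriv_zero]
  deriv_one := by simp [deriv.neg, h.deriv_one]

lemma sub (hw : SolvesBVP w f) (hv : SolvesBVP v g) : SolvesBVP (w - v) (f - g) := by
  have h1 : deriv (w - v) = deriv w - deriv v :=
    funext fun t => deriv_sub (hw.differentiable t) (hv.differentiable t)
  have h2 : deriv (deriv (w - v)) = deriv (deriv w) - deriv (deriv v) := by
    rw [h1]
    exact funext fun t => deriv_sub (hw.hasDerivAt_deriv t).differentiableAt
      (hv.hasDerivAt_deriv t).differentiableAt
  refine ⟨hw.contDiff.sub hv.contDiff, fun t ht => ?_, by simp [hw.zero, hv.zero], ?_, ?_⟩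
  · rw [h2]; exact (hw.hasDerivAt_deriv2 t ht).sub (hv.hasDerivAt_deriv2 t ht)
  · simp [h1, hw.deriv_zero, hv.deriv_zero]
  · simp [h1, hw.deriv_one, hv.deriv_one]

lemma congr_rhs (h : SolvesBVP w f) (hfg : EqOn f g (Ioo 0 1)) : SolvesBVP w g :=
  { h with hasDerivAt_deriv2 := fun t ht => hfg ht ▸ h.hasDerivAt_deriv2 t ht }

lemma continuous_deriv2 (h : SolvesBVP w f) : Continuous (deriv (deriv w)) :=
  h.contDiff_deriv.continuous_deriv le_rfl

lemma deriv_le_parabola (h : SolvesBVP w f) (hf : ∀ t ∈ Ioo (0:ℝ) 1, -K ≤ f t) {t : ℝ}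
    (ht : t ∈ Icc (0:ℝ) 1) : deriv w t ≤ K * (t * (1 - t)) / 2 :=
  le_parabola_of_deriv2_ge h.hasDerivAt_deriv h.hasDerivAt_deriv2 hf h.deriv_zero h.deriv_one ht

lemma deriv_le_div_eight (h : SolvesBVP w f) (hf : ∀ t ∈ Ioo (0:ℝ) 1, -K ≤ f t) (hK : 0 ≤ K)
    {t : ℝ} (ht : t ∈ Icc (0:ℝ) 1) : deriv w t ≤ K / 8 := by
  nlinarith [h.deriv_le_parabola hf ht, mul_nonneg hK (sq_nonneg (2 * t - 1))]

lemma le_div_twelve (h : SolvesBVP w f) (hf : ∀ t ∈ Ioo (0:ℝ) 1, -K ≤ f t) (hK : 0 ≤ K)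
    {t : ℝ} (ht : t ∈ Icc (0:ℝ) 1) : w t ≤ K / 12 := by
  have hψ (s : ℝ) : HasDerivAt (fun s => K * (s ^ 2 / 4 - s ^ 3 / 6)) (K * (s * (1 - s)) / 2) s :=
    ((((hasDerivAt_pow 2 s).div_const 4).sub ((hasDerivAt_pow 3 s).div_const 6)).const_mul K)
      |>.congr_deriv (by ring)
  have hwψ : w t ≤ K * (t ^ 2 / 4 - t ^ 3 / 6) :=
    image_le_of_deriv_right_le_deriv_boundary h.differentiable.continuous.continuousOn
      (fun s _ => (h.differentiable s).hasDerivAt.hasDerivWithinAt) (by simp [h.zero])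
      (fun s _ => (hψ s).continuousAt.continuousWithinAt) (fun s _ => (hψ s).hasDerivWithinAt)
      (fun s hs => h.deriv_le_parabola hf (Ico_subset_Icc_self hs)) ht
  nlinarith [mul_nonneg hK (mul_nonneg (sq_nonneg (1 - t)) (by linarith [ht.1] : 0 ≤ 1 + 2 * t))]

lemma abs_le_div_twelve (h : SolvesBVP w f) (hf : ∀ t ∈ Ioo (0:ℝ) 1, |f t| ≤ K) {t : ℝ}
    (ht : t ∈ Icc (0:ℝ) 1) : |w t| ≤ K / 12 := by
  have hK : 0 ≤ K := (abs_nonneg _).trans (hf (1 / 2) ⟨by norm_num, by norm_num⟩)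
  refine abs_le.2 ⟨?_, h.le_div_twelve (fun s hs => neg_le_of_abs_le (hf s hs)) hK ht⟩
  have := h.neg.le_div_twelve (fun s hs => neg_le_neg (le_of_abs_le (hf s hs))) hK ht
  simp only [Pi.neg_apply] at this
  linarith

lemma eq_zero_of_abs_le {L : ℝ} (h : SolvesBVP w f) (hL₀ : 0 ≤ L) (hL : L < 12)
    (hf : ∀ t ∈ Ioo (0:ℝ) 1, |f t| ≤ L * |w t|) {t : ℝ} (ht : t ∈ Icc (0:ℝ) 1) : w t = 0 := by
  obtain ⟨s, hs, hmax⟩ := isCompact_Icc.exists_isMaxOn (nonempty_Icc.2 zero_le_one)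
    h.differentiable.continuous.abs.continuousOn
  have hbound : ∀ r ∈ Icc (0:ℝ) 1, |w r| ≤ L * |w s| / 12 := fun r hr =>
    h.abs_le_div_twelve (fun x hx => (hf x hx).trans (mul_le_mul_of_nonneg_left
      (hmax (Ioo_subset_Icc_self hx)) hL₀)) hr
  have hs0 : |w s| = 0 := by
    nlinarith [hbound s hs, abs_nonneg (w s)]
  exact abs_eq_zero.1 (le_antisymm ((hmax ht).trans hs0.le) (abs_nonneg _))

lemma deriv_nonneg (h : SolvesBVP w f) (hf : ∀ t ∈ Ioo (0:ℝ) 1, f t ≤ 0) {t : ℝ}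
    (ht : t ∈ Icc (0:ℝ) 1) : 0 ≤ deriv w t := by
  have := le_parabola_of_deriv2_ge (K := 0) (fun s => (h.hasDerivAt_deriv s).neg)
    (fun s hs => (h.hasDerivAt_deriv2 s hs).neg) (fun s hs => by linarith [hf s hs])
    (by simp [h.deriv_zero]) (by simp [h.deriv_one]) ht
  simpa using this

lemma monotoneOn (h : SolvesBVP w f) (hf : ∀ t ∈ Ioo (0:ℝ) 1, f t ≤ 0) :
    MonotoneOn w (Icc 0 1) :=
  monotoneOn_of_hasDerivWithinAt_nonneg (convex_Icc 0 1) h.differentiable.continuous.continuousOn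
    (fun t _ => (h.differentiable t).hasDerivAt.hasDerivWithinAt)
    (fun _ ht => h.deriv_nonneg hf (interior_subset ht))

lemma nonneg (h : SolvesBVP w f) (hf : ∀ t ∈ Ioo (0:ℝ) 1, f t ≤ 0) {t : ℝ}
    (ht : t ∈ Icc (0:ℝ) 1) : 0 ≤ w t :=
  h.zero ▸ h.monotoneOn hf (left_mem_Icc.2 zero_le_one) ht ht.1

lemma abs_deriv2_le_div_two (h : SolvesBVP w f) (hf : ∀ t ∈ Ioo (0:ℝ) 1, -K ≤ f t ∧ f t ≤ 0)
    {t : ℝ} (ht : t ∈ Icc (0:ℝ) 1) : |deriv (deriv w) t| ≤ K / 2 := by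
  have hanti : AntitoneOn (deriv (deriv w)) (Icc 0 1) :=
    antitoneOn_of_hasDerivWithinAt_nonpos (convex_Icc 0 1) h.continuous_deriv2.continuousOn
      (fun s hs => (h.hasDerivAt_deriv2 s (by rwa [interior_Icc] at hs)).hasDerivWithinAt)
      (fun s hs => (hf s (by rwa [interior_Icc] at hs)).2)
  have hf' s hs := (hf s hs).1
  have h0 := deriv_zero_le_of_deriv2_ge h.hasDerivAt_deriv h.hasDerivAt_deriv2 hf' h.deriv_zero
    h.deriv_one
  have h1 := neg_le_deriv_one_of_deriv2_ge h.hasDerivAt_deriv h.hasDerivAt_deriv2 hf' h.deriv_zero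
    h.deriv_one
  exact abs_le.2 ⟨h1.trans (hanti ht (right_mem_Icc.2 zero_le_one) ht.2),
    (hanti (left_mem_Icc.2 zero_le_one) ht ht.1).trans h0⟩

end SolvesBVP

noncomputable def nonlinearity (x : ℝ) : ℝ := (5 * x ^ 3 + 4 * x + 3) / (x ^ 2 + 1)

lemma continuous_nonlinearity : Continuous nonlinearity :=
  Continuous.div (by fun_prop) (by fun_prop) fun x => by positivity

lemma nonlinearity_mem {x : ℝ} (hx : x ∈ Icc (0:ℝ) 0.3417) : nonlinearity x ∈ Icc (0:ℝ) 4.1 := by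
  obtain ⟨hx0, hx1⟩ := hx
  refine ⟨by unfold nonlinearity; positivity, ?_⟩
  rw [nonlinearity, div_le_iff₀ (by positivity)]
  nlinarith [mul_nonneg hx0 hx0]

lemma abs_nonlinearity_sub_le {x y : ℝ} (hx : x ∈ Icc (0:ℝ) 1) (hy : y ∈ Icc (0:ℝ) 1) :
    |nonlinearity x - nonlinearity y| ≤ 5 * |x - y| := by
  obtain ⟨hx0, hx1⟩ := hx
  obtain ⟨hy0, hy1⟩ := hy
  have hD : 0 < (x ^ 2 + 1) * (y ^ 2 + 1) := by positivity
  set Q := 5 * x ^ 2 * y ^ 2 + 5 * x ^ 2 + x * y + 5 * y ^ 2 + 4 - 3 * (x + y)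
  have hsub : nonlinearity x - nonlinearity y = (x - y) * Q / ((x ^ 2 + 1) * (y ^ 2 + 1)) := by
    rw [nonlinearity, nonlinearity, div_sub_div _ _ (by positivity) (by positivity)]
    ring
  have hQ : |Q| ≤ 5 * ((x ^ 2 + 1) * (y ^ 2 + 1)) := by
    refine abs_le.2 ⟨?_, ?_⟩ <;> nlinarith [mul_nonneg hx0 hy0, mul_le_mul hx1 hy1 hy0 zero_le_one]
  rw [hsub, abs_div, abs_mul, abs_of_pos hD, div_le_iff₀ hD]
  nlinarith [mul_le_mul_of_nonneg_left hQ (abs_nonneg (x - y))]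

/-- Truncating the argument to `[0, 0.3417]` makes the nonlinearity bounded and `5`-Lipschitz on
all of `ℝ`; the solution constructed below stays in that range, where the truncation is inactive. -/
noncomputable def truncNonlinearity : ℝ → ℝ :=
  IccExtend (by norm_num : (0:ℝ) ≤ 0.3417) (nonlinearity ∘ Subtype.val)

lemma continuous_truncNonlinearity : Continuous truncNonlinearity :=
  (continuous_nonlinearity.comp continuous_subtype_val).Icc_extend'

lemma truncNonlinearity_mem (x : ℝ) : truncNonlinearity x ∈ Icc (0:ℝ) 4.1 :=
  nonlinearity_mem (Subtype.prop _)

lemma truncNonlinearity_of_mem {x : ℝ} (hx : x ∈ Icc (0:ℝ) 0.3417) :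
    truncNonlinearity x = nonlinearity x :=
  IccExtend_of_mem _ _ hx

lemma abs_truncNonlinearity_sub_le (x y : ℝ) :
    |truncNonlinearity x - truncNonlinearity y| ≤ 5 * |x - y| := by
  have hmem (z : ℝ) : (projIcc (0:ℝ) 0.3417 (by norm_num) z : ℝ) ∈ Icc (0:ℝ) 1 :=
    Icc_subset_Icc_right (by norm_num) (Subtype.prop _)
  calc _ ≤ 5 * |(projIcc (0:ℝ) 0.3417 (by norm_num) x : ℝ) - projIcc 0 0.3417 (by norm_num) y| :=
        abs_nonlinearity_sub_le (hmem x) (hmem y)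
    _ ≤ 5 * |x - y| := mul_le_mul_of_nonneg_left (abs_projIcc_sub_projIcc _) (by norm_num)

noncomputable def primitive (f : ℝ → ℝ) (t : ℝ) : ℝ := ∫ s in (0:ℝ)..t, f s

section Primitive

variable {f : ℝ → ℝ}

lemma hasDerivAt_primitive (hf : Continuous f) (t : ℝ) : HasDerivAt (primitive f) (f t) t :=
  (hf.integral_hasStrictDerivAt 0 t).hasDerivAt

lemma deriv_primitive (hf : Continuous f) : deriv (primitive f) = f :=
  funext fun t => (hasDerivAt_primitive hf t).deriv

@[simp]
lemma primitive_zero : primitive f 0 = 0 := intervalIntegral.integral_same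

lemma ContDiff.primitive {n : ℕ} (hf : ContDiff ℝ n f) : ContDiff ℝ (n + 1) (primitive f) :=
  contDiff_succ_iff_deriv.2 ⟨fun t => (hasDerivAt_primitive hf.continuous t).differentiableAt,
    by simp, by rwa [deriv_primitive hf.continuous]⟩

end Primitive

/-- The second derivative is `c - ∫₀ᵗ h`; the constant `c = ∫₀¹ ∫₀ˢ h` makes the first derivative
vanish at `1`. -/
noncomputable def greenSol (h : ℝ → ℝ) : ℝ → ℝ :=
  primitive (primitive fun t => primitive (primitive h) 1 - primitive h t)

lemma solvesBVP_greenSol {h : ℝ → ℝ} (hh : Continuous h) :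
    SolvesBVP (greenSol h) (fun t => -h t) := by
  set q : ℝ → ℝ := fun t => primitive (primitive h) 1 - primitive h t
  have hH : Continuous (primitive h) := (contDiff_zero.2 hh).primitive.continuous
  have hq : Continuous q := continuous_const.sub hH
  have hd : deriv (greenSol h) = primitive q :=
    deriv_primitive (contDiff_zero.2 hq).primitive.continuous
  have hdd : deriv (deriv (greenSol h)) = q := by rw [hd, deriv_primitive hq]
  refine ⟨?_, fun t _ => ?_, primitive_zero, by rw [hd, primitive_zero], ?_⟩
  · exact_mod_cast (contDiff_zero.2 hq).primitive.primitive
  · rw [hdd]; exact (hasDerivAt_primitive hh t).const_sub _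
  · rw [hd, primitive, intervalIntegral.integral_sub intervalIntegrable_const
      (hH.intervalIntegrable 0 1)]
    simp [primitive]

noncomputable def forcing (u : C(Icc (0:ℝ) 1, ℝ)) : ℝ → ℝ :=
  truncNonlinearity ∘ IccExtend zero_le_one u

lemma continuous_forcing (u : C(Icc (0:ℝ) 1, ℝ)) : Continuous (forcing u) :=
  continuous_truncNonlinearity.comp u.continuous.Icc_extend'

lemma abs_forcing_sub_le (u v : C(Icc (0:ℝ) 1, ℝ)) (s : ℝ) :
    |forcing u s - forcing v s| ≤ 5 * dist u v :=
  (abs_truncNonlinearity_sub_le _ _).trans <| mul_le_mul_of_nonneg_left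
    (ContinuousMap.dist_apply_le_dist (f := u) (g := v) _) (by norm_num)

noncomputable def picard (u : C(Icc (0:ℝ) 1, ℝ)) : C(Icc (0:ℝ) 1, ℝ) :=
  ⟨fun t => greenSol (forcing u) t,
    (solvesBVP_greenSol (continuous_forcing u)).differentiable.continuous.comp
      continuous_subtype_val⟩

lemma dist_picard_le (u v : C(Icc (0:ℝ) 1, ℝ)) :
    dist (picard u) (picard v) ≤ 5 / 12 * dist u v := by
  refine (ContinuousMap.dist_le (by positivity)).2 fun t => ?_
  have hw := (solvesBVP_greenSol (continuous_forcing u)).sub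
    (solvesBVP_greenSol (continuous_forcing v))
  have := hw.abs_le_div_twelve (K := 5 * dist u v) (fun s _ => by
    simpa only [Pi.sub_apply, neg_sub_neg, abs_sub_comm] using abs_forcing_sub_le u v s) t.2
  rw [Real.dist_eq]
  exact this.trans_eq (by ring)

lemma contractingWith_picard : ContractingWith (5 / 12) picard :=
  ⟨by norm_num [← NNReal.coe_lt_coe],
    LipschitzWith.of_dist_le_mul fun u v => by exact_mod_cast dist_picard_le u v⟩

lemma neg_forcing_mem (u : C(Icc (0:ℝ) 1, ℝ)) (t : ℝ) : -forcing u t ∈ Icc (-4.1) 0 :=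
  ⟨neg_le_neg (truncNonlinearity_mem _).2, neg_nonpos.2 (truncNonlinearity_mem _).1⟩

noncomputable def picardFixedPoint : C(Icc (0:ℝ) 1, ℝ) :=
  ContractingWith.fixedPoint picard contractingWith_picard

noncomputable def solution : ℝ → ℝ := greenSol (forcing picardFixedPoint)

lemma solvesBVP_solution : SolvesBVP solution (fun t => -forcing picardFixedPoint t) :=
  solvesBVP_greenSol (continuous_forcing _)

lemma solution_mem {t : ℝ} (ht : t ∈ Icc (0:ℝ) 1) : solution t ∈ Icc (0:ℝ) 0.3417 :=
  ⟨solvesBVP_solution.nonneg (fun s _ => (neg_forcing_mem _ s).2) ht,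
    (solvesBVP_solution.le_div_twelve (fun s _ => (neg_forcing_mem _ s).1) (by norm_num) ht).trans
      (by norm_num)⟩

lemma forcing_picardFixedPoint {t : ℝ} (ht : t ∈ Icc (0:ℝ) 1) :
    forcing picardFixedPoint t = nonlinearity (solution t) := by
  have hfix : picardFixedPoint ⟨t, ht⟩ = solution t :=
    congrArg (· ⟨t, ht⟩) (ContractingWith.fixedPoint_isFixedPt contractingWith_picard).symm
  rw [forcing, Function.comp_apply, IccExtend_of_mem _ _ ht, hfix,
    truncNonlinearity_of_mem (solution_mem ht)]

lemma isSolution_iff {u : ℝ → ℝ} : IsSolution u ↔ SolvesBVP u (fun t => -nonlinearity (u t)) :=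
  ⟨fun ⟨h₁, h₂, h₃, h₄, h₅⟩ => ⟨h₁, h₂, h₃, h₄, h₅⟩,
    fun ⟨h₁, h₂, h₃, h₄, h₅⟩ => ⟨h₁, h₂, h₃, h₄, h₅⟩⟩

lemma isSolution_solution : IsSolution solution :=
  isSolution_iff.2 <| solvesBVP_solution.congr_rhs fun t ht => by
    simp only [forcing_picardFixedPoint (Ioo_subset_Icc_self ht)]

lemma inBounds_solution : InBounds solution := fun t ht =>
  ⟨solution_mem ht,
    ⟨solvesBVP_solution.deriv_nonneg (fun s _ => (neg_forcing_mem _ s).2) ht,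
      (solvesBVP_solution.deriv_le_div_eight (fun s _ => (neg_forcing_mem _ s).1) (by norm_num)
        ht).trans (by norm_num)⟩,
    (solvesBVP_solution.abs_deriv2_le_div_two (fun s _ => neg_forcing_mem _ s) ht).trans
      (by norm_num)⟩

lemma eqOn_of_isSolution {u v : ℝ → ℝ} (hu : IsSolution u) (hv : IsSolution v)
    (hu₁ : MapsTo u (Icc 0 1) (Icc 0 1)) (hv₁ : MapsTo v (Icc 0 1) (Icc 0 1)) :
    EqOn v u (Icc 0 1) := fun t ht => by
  have hw := (isSolution_iff.1 hv).sub (isSolution_iff.1 hu)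
  refine sub_eq_zero.1 (hw.eq_zero_of_abs_le (L := 5) (by norm_num) (by norm_num) (fun s hs => ?_)
    ht)
  have hs' := Ioo_subset_Icc_self hs
  simpa only [Pi.sub_apply, neg_sub_neg, abs_sub_comm (v s)] using
    abs_nonlinearity_sub_le (hu₁ hs') (hv₁ hs')

theorem example_8 :
    ∃ u : ℝ → ℝ, (IsSolution u ∧ InBounds u ∧
      (∀ t ∈ Set.Icc (0:ℝ) 1, 0 ≤ u t) ∧ MonotoneOn u (Set.Icc (0:ℝ) 1)) ∧
      ∀ v : ℝ → ℝ, IsSolution v ∧ InBounds v → ∀ t ∈ Set.Icc (0:ℝ) 1, v t = u t := by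
  refine ⟨solution, ⟨isSolution_solution, inBounds_solution, fun t ht => (solution_mem ht).1,
    solvesBVP_solution.monotoneOn fun s _ => (neg_forcing_mem _ s).2⟩, ?_⟩
  rintro v ⟨hv, hvb⟩ t ht
  have hsmall : Icc (0:ℝ) 0.3417 ⊆ Icc 0 1 := Icc_subset_Icc_right (by norm_num)
  exact eqOn_of_isSolution isSolution_solution hv (fun s hs => hsmall (solution_mem hs))
    (fun s hs => hsmall (hvb s hs).1) ht
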